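/- (Trace bound (13).) Let n ≥ m be an integer, let w*∞ be a D-optimal approximate design with invertible information matrix M_*, and let w be any approximate design with w_ℓ ≥ 1/n for some index ℓ ∈ {1,…,N}. Then tr(M_*⁻¹ M(w)) ≤ ((n−1)/n)·max_{i∈{1,…,N}} v*_i + (1/n)·v*_ℓ. In particular, if max_{i} v*_i = m, then tr(M_*⁻¹ M(w)) ≤ ((n−1)·m + v*_ℓ)/n. -/
import Mathlib


open Matrix BigOperators

/-- An approximate design: nonnegative weights summing to one. -/
def IsDesign {N : ℕ} (w : Fin N → ℝ) : Prop :=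
  (∀ i, 0 ≤ w i) ∧ ∑ i, w i = 1

/-- An exact design of size `n`: an approximate design with `n * w i` an integer for all `i`. -/
def IsExactDesign {N : ℕ} (n : ℕ) (w : Fin N → ℝ) : Prop :=
  IsDesign w ∧ ∀ i, ∃ z : ℤ, (n : ℝ) * w i = (z : ℝ)

/-- The information matrix `M(w) = ∑ i, w i • f i (f i)ᵀ`. -/
noncomputable def infoMatrix {N m : ℕ} (f : Fin N → Fin m → ℝ) (w : Fin N → ℝ) :
    Matrix (Fin m) (Fin m) ℝ :=
  ∑ i, w i • vecMulVec (f i) (f i)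

/-- The D-criterion `Φ(M) = det(M)^(1/m)`. -/
noncomputable def Dcrit {m : ℕ} (M : Matrix (Fin m) (Fin m) ℝ) : ℝ :=
  M.det ^ ((1 : ℝ) / (m : ℝ))

/-- A D-optimal approximate design. -/
def IsDOptimalApprox {N m : ℕ} (f : Fin N → Fin m → ℝ) (w : Fin N → ℝ) : Prop :=
  IsDesign w ∧ ∀ w' : Fin N → ℝ, IsDesign w' →
    Dcrit (infoMatrix f w') ≤ Dcrit (infoMatrix f w)

/-- A D-optimal exact design of size `n`. -/
def IsDOptimalExact {N m : ℕ} (f : Fin N → Fin m → ℝ) (n : ℕ) (w : Fin N → ℝ) : Prop :=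
  IsExactDesign n w ∧ ∀ w' : Fin N → ℝ, IsExactDesign n w' →
    Dcrit (infoMatrix f w') ≤ Dcrit (infoMatrix f w)

/-- The variance function `v_i(w) = f iᵀ M(w)⁻¹ f i`. -/
noncomputable def varfun {N m : ℕ} (f : Fin N → Fin m → ℝ) (w : Fin N → ℝ) (i : Fin N) : ℝ :=
  f i ⬝ᵥ (infoMatrix f w)⁻¹ *ᵥ f i

lemma trace_mul_vecMulVec {m : ℕ} (A : Matrix (Fin m) (Fin m) ℝ) (u : Fin m → ℝ) :
    (A * vecMulVec u u).trace = u ⬝ᵥ A *ᵥ u := by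
  simp only [Matrix.trace, Matrix.diag, Matrix.mul_apply, vecMulVec_apply, dotProduct,
    Matrix.mulVec, Finset.mul_sum]
  congr 1; ext i; congr 1; ext j; ring

theorem trace_bound {m N : ℕ} (hm : 2 ≤ m) (hN : 2 ≤ N) (f : Fin N → Fin m → ℝ)
    (hns : ∃ w : Fin N → ℝ, IsDesign w ∧ (infoMatrix f w).det ≠ 0)
    (n : ℕ) (hn : m ≤ n)
    (wapp : Fin N → ℝ) (happ : IsDOptimalApprox f wapp)
    (happns : (infoMatrix f wapp).det ≠ 0)
    (w : Fin N → ℝ) (hw : IsDesign w)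
    (ℓ : Fin N) (hℓ : 1 / (n : ℝ) ≤ w ℓ) :
    ((infoMatrix f wapp)⁻¹ * infoMatrix f w).trace ≤
      ((n : ℝ) - 1) / (n : ℝ) * (⨆ i, varfun f wapp i)
        + (1 / (n : ℝ)) * varfun f wapp ℓ ∧
    ((⨆ i, varfun f wapp i) = (m : ℝ) →
      ((infoMatrix f wapp)⁻¹ * infoMatrix f w).trace ≤
        (((n : ℝ) - 1) * (m : ℝ) + varfun f wapp ℓ) / (n : ℝ)) := by

  have hn0 : (0:ℝ) < n := by
    have : 2 ≤ n := le_trans hm hn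
    exact_mod_cast lt_of_lt_of_le (by norm_num) this
  set A := (infoMatrix f wapp)⁻¹
  -- trace identity
  have htr : (A * infoMatrix f w).trace = ∑ i, w i * varfun f wapp i := by
    unfold infoMatrix
    rw [Finset.mul_sum, Matrix.trace_sum]
    congr 1; ext i
    rw [Matrix.mul_smul, Matrix.trace_smul, trace_mul_vecMulVec]
    rfl
  set V := ⨆ i, varfun f wapp i with hV
  have hbdd : BddAbove (Set.range (varfun f wapp)) := Set.Finite.bddAbove (Set.finite_range _)
  have hle : ∀ i, varfun f wapp i ≤ V := fun i => le_ciSup hbdd i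
  have hsum : ∑ i ∈ Finset.univ.erase ℓ, w i = 1 - w ℓ := by
    have := hw.2
    rw [← Finset.add_sum_erase _ _ (Finset.mem_univ ℓ)] at this
    linarith
  have hstep : ∑ i, w i * varfun f wapp i ≤ (1 - w ℓ) * V + w ℓ * varfun f wapp ℓ := by
    rw [← Finset.add_sum_erase _ _ (Finset.mem_univ ℓ), ← hsum, Finset.sum_mul, add_comm]
    gcongr with i hi
    · exact hw.1 i
    · exact hle i
  have hmain : (A * infoMatrix f w).trace ≤
      ((n : ℝ) - 1) / (n : ℝ) * V + (1 / (n : ℝ)) * varfun f wapp ℓ := by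
    rw [htr]
    refine le_trans hstep ?_
    have h1 : varfun f wapp ℓ ≤ V := hle ℓ
    have h2 : (1:ℝ)/(n:ℝ) ≤ w ℓ := hℓ
    have key : (w ℓ - 1/(n:ℝ)) * (V - varfun f wapp ℓ) ≥ 0 :=
      mul_nonneg (by linarith) (by linarith)
    have : ((n : ℝ) - 1) / (n : ℝ) = 1 - 1/(n:ℝ) := by field_simp
    rw [this]; nlinarith
  refine ⟨hmain, fun hVm => ?_⟩
  rw [hVm] at hmain
  calc (A * infoMatrix f w).trace ≤ _ := hmain
    _ = (((n : ℝ) - 1) * (m : ℝ) + varfun f wapp ℓ) / (n : ℝ) := by field_simp
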